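/- arXiv:2403.09337 — 2 statements merged into one kernel-verified Lean document; each statement's English description precedes it below -/
import Mathlib

section
/- Let F be a field of characteristic zero, L a finite-dimensional split-semisimple Lie algebra over F with splitting Cartan subalgebra H, A an associative F-algebra, and φ : L → Der_F(A) a Lie algebra homomorphism into the Lie algebra of F-linear derivations of A. Call a two-sided ideal I of A an L-ideal if φ(d)(I) ⊆ I for all d ∈ L. Suppose a_1, …, a_n ∈ A are weight vectors of pairwise distinct weights, i.e., there exist pairwise distinct linear maps λ_1, …, λ_n : H → F such that φ(h)(a_j) = λ_j(h)·a_j for all h ∈ H and 1 ≤ j ≤ n. Then the smallest L-ideal of A containing {a_1, …, a_n} equals the smallest L-ideal of A containing the single element a_1 + ⋯ + a_n. -/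
/-!
Over an infinite field some `h ∈ H` separates the finitely many distinct weights, so the
`a j` are eigenvectors of the single operator `φ h` with pairwise distinct eigenvalues
`λ_j(h)`. Every `L`-ideal is an `F`-subspace stable under `φ h`, hence under every polynomial
in `φ h`; applying the Lagrange basis polynomial of the node `λ_j(h)` to `∑ a_i` extracts `a_j`.
-/

attribute [local instance] LieRing.ofAssociativeRing

/-- `φ : L → End_F(A)` acts by derivations: each `φ d` satisfies the Leibniz rule. -/
def ActsByDerivations (F : Type*) [Field F] {L A : Type*} [LieRing L] [LieAlgebra F L]
    [Ring A] [Algebra F A] (φ : L →ₗ⁅F⁆ Module.End F A) : Prop :=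
  ∀ (d : L) (a b : A), φ d (a * b) = φ d a * b + a * φ d b

/-- A subset `I ⊆ A` is an `L`-ideal (for the action `φ`): it is a two-sided ideal of `A`
which is invariant under all the operators `φ d`, `d ∈ L`. -/
def IsLIdealSet (F : Type*) [Field F] {L A : Type*} [LieRing L] [LieAlgebra F L]
    [Ring A] [Algebra F A] (φ : L →ₗ⁅F⁆ Module.End F A) (I : Set A) : Prop :=
  (0 : A) ∈ I ∧ (∀ x ∈ I, ∀ y ∈ I, x + y ∈ I) ∧ (∀ x ∈ I, -x ∈ I) ∧
    (∀ x ∈ I, ∀ a : A, a * x ∈ I ∧ x * a ∈ I) ∧ (∀ x ∈ I, ∀ d : L, φ d x ∈ I)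

open Polynomial

theorem Module.Dual.exists_injective_apply {K V ι : Type*} [Field K] [Infinite K]
    [AddCommGroup V] [Module K V] [Finite ι] {f : ι → Module.Dual K V}
    (hf : Function.Injective f) : ∃ v, Function.Injective fun i ↦ f i v := by
  obtain ⟨v, hv⟩ := Module.Dual.exists_forall_ne_zero_of_forall_exists
    (ι := {p : ι × ι // p.1 ≠ p.2}) (fun p ↦ f p.1.1 - f p.1.2) fun p ↦ by
      by_contra! h
      exact p.2 (hf (sub_eq_zero.mp (LinearMap.ext h)))
  refine ⟨v, fun i j hij ↦ by_contra fun hne ↦ hv ⟨(i, j), hne⟩ ?_⟩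
  simpa [sub_eq_zero] using hij

theorem Module.End.mem_of_sum_mem_of_apply_eq_smul {K M ι : Type*} [Field K] [AddCommGroup M]
    [Module K M] [Fintype ι] [DecidableEq ι] {f : Module.End K M} {p : Submodule K M}
    (hp : p ≤ p.comap f) {μ : ι → K} (hμ : Function.Injective μ) {v : ι → M}
    (hv : ∀ i, f (v i) = μ i • v i) (hsum : ∑ i, v i ∈ p) (i : ι) : v i ∈ p := by
  have hpoly : aeval f (Lagrange.basis Finset.univ μ i) (∑ j, v j) = v i := by
    rw [map_sum, Finset.sum_eq_single i]
    · rw [Module.End.aeval_apply_of_mem_apply_eq_smul (hv i),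
        Lagrange.eval_basis_self hμ.injOn (Finset.mem_univ i), one_smul]
    · intro j _ hji
      rw [Module.End.aeval_apply_of_mem_apply_eq_smul (hv j),
        Lagrange.eval_basis_of_ne hji.symm (Finset.mem_univ j), zero_smul]
    · exact fun hi ↦ absurd (Finset.mem_univ i) hi
  exact hpoly ▸ Polynomial.aeval_apply_smul_mem_of_le_comap hsum _ f hp

namespace IsLIdealSet

variable {F L A : Type*} [Field F] [LieRing L] [LieAlgebra F L] [Ring A] [Algebra F A]
  {φ : L →ₗ⁅F⁆ Module.End F A} {I : Set A}

def toSubmodule (hI : IsLIdealSet F φ I) : Submodule F A where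
  carrier := I
  zero_mem' := hI.1
  add_mem' hx hy := hI.2.1 _ hx _ hy
  smul_mem' c x hx := by
    rw [Algebra.smul_def]
    exact (hI.2.2.2.1 x hx _).1

theorem toSubmodule_le_comap (hI : IsLIdealSet F φ I) (d : L) :
    hI.toSubmodule ≤ hI.toSubmodule.comap (φ d) :=
  fun x hx ↦ hI.2.2.2.2 x hx d

end IsLIdealSet

theorem primitive_element_lemma_general
    (F : Type*) [Field F] [CharZero F]
    (L : Type*) [LieRing L] [LieAlgebra F L]
    (H : LieSubalgebra F L)
    (A : Type*) [Ring A] [Algebra F A]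
    (φ : L →ₗ⁅F⁆ Module.End F A)
    (n : ℕ) (a : Fin n → A) (lam : Fin n → (H →ₗ[F] F))
    (hdist : Function.Injective lam)
    (hwt : ∀ (h : H) (j : Fin n), φ (h : L) (a j) = lam j h • a j) :
    ⋂₀ {I : Set A | IsLIdealSet F φ I ∧ Set.range a ⊆ I}
      = ⋂₀ {I : Set A | IsLIdealSet F φ I ∧ (∑ j, a j) ∈ I} := by
  obtain ⟨h, hh⟩ := Module.Dual.exists_injective_apply hdist
  congr 1
  ext I
  refine and_congr_right fun hI ↦ ⟨fun hsub ↦ ?_, ?_⟩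
  · exact hI.toSubmodule.sum_mem fun j _ ↦ hsub ⟨j, rfl⟩
  · rintro hsum _ ⟨j, rfl⟩
    exact Module.End.mem_of_sum_mem_of_apply_eq_smul (hI.toSubmodule_le_comap (h : L)) hh
      (hwt h) hsum j

/-- **primitive element lemma.**  Let `F` be a field of characteristic zero, `L`
a finite-dimensional split-semisimple Lie algebra over `F` with splitting Cartan subalgebra `H`,
`A` an associative `F`-algebra, and `φ : L → Der_F(A)` a Lie algebra homomorphism into the
derivations of `A`.  If `a 0, …, a (n-1)` are weight vectors of pairwise distinct weights
`lam 0, …, lam (n-1) : H → F`, then the smallest `L`-ideal of `A` containing all the `a j`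
equals the smallest `L`-ideal containing the single element `∑ j, a j`. -/
theorem primitive_element_lemma
    (F : Type*) [Field F] [CharZero F]
    (L : Type*) [LieRing L] [LieAlgebra F L] [FiniteDimensional F L]
    [LieAlgebra.IsSemisimple F L]
    (H : LieSubalgebra F L) (hH : H.IsCartanSubalgebra)
    (hsplit : ∀ h ∈ H, Polynomial.Splits
      (LinearMap.charpoly (LieAlgebra.ad F L h)))
    (A : Type*) [Ring A] [Algebra F A]
    (φ : L →ₗ⁅F⁆ Module.End F A) (hφ : ActsByDerivations F φ)
    (n : ℕ) (a : Fin n → A) (lam : Fin n → (H →ₗ[F] F))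
    (hdist : Function.Injective lam)
    (hwt : ∀ (h : H) (j : Fin n), φ (h : L) (a j) = lam j h • a j) :
    ⋂₀ {I : Set A | IsLIdealSet F φ I ∧ Set.range a ⊆ I}
      = ⋂₀ {I : Set A | IsLIdealSet F φ I ∧ (∑ j, a j) ∈ I} :=
  primitive_element_lemma_general F L H A φ n a lam hdist hwt
end

section
/- Let F be a field of characteristic zero and k ≥ 2. The unital F-subalgebra U of End_F(M_k(F)) generated by the inner derivations ad_a for a ∈ M_k(F) equals the set of all f ∈ End_F(M_k(F)) such that f(F·I_k) ⊆ F·I_k and f(sl_k(F)) ⊆ sl_k(F); equivalently, U is isomorphic as an F-algebra to End_F(F·I_k) ⊕ End_F(sl_k(F)). In particular, dim_F U = (k² − 1)² + 1. -/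
/-!
Inner derivations kill the scalars and preserve the traceless matrices, so `U` lies in the
subalgebra `T` of endomorphisms stabilizing both summands of `M_k(F) = F·1 ⊕ sl_k(F)`, and
`T ≅ End(F·1) × End(sl_k(F))` by restriction. For the converse, with matrix units `E a b`,
the map `∑ a b, ad (E a b) ∘ ad (E b a * u)` sends `z` to
`k u z - tr z · u - tr (u z) · 1 + tr u · z`.
At `u = 1` this is `2k π`, where `π` is the projection onto `sl_k(F)` along `F·1`, so `π ∈ U`;
compressing by `π` gives `π L_u π ∈ U` for all `u`. Since `x w y = x y w - x [y, w]` with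
`[y, w]` traceless, also `π L_x R_y π ∈ U`, and as the maps `z ↦ x z y` span `End(M_k(F))`,
`π f π ∈ U` for every `f`. Finally each `f ∈ T` equals `c (1 - π) + π f π`, where
`f 1 = c · 1`.
-/

open LinearMap Module

namespace Submodule
variable {R M : Type*} [CommSemiring R] [AddCommMonoid M] [Module R M]

def stabilizerSubalgebra (p : Submodule R M) : Subalgebra R (Module.End R M) where
  carrier := {f | ∀ x ∈ p, f x ∈ p}
  mul_mem' hf hg _ hx := hf _ (hg _ hx)
  add_mem' hf hg _ hx := p.add_mem (hf _ hx) (hg _ hx)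
  algebraMap_mem' c _ hx := p.smul_mem c hx

@[simp]
lemma mem_stabilizerSubalgebra {p : Submodule R M} {f : Module.End R M} :
    f ∈ p.stabilizerSubalgebra ↔ ∀ x ∈ p, f x ∈ p :=
  Iff.rfl

section IsCompl
variable {R M : Type*} [CommRing R] [AddCommGroup M] [Module R M] {p q : Submodule R M}

noncomputable def endProdAlgHomOfIsCompl (h : IsCompl p q) :
    Module.End R p × Module.End R q →ₐ[R] Module.End R M :=
  ((prodEquivOfIsCompl p q h).conjAlgEquiv R).toAlgHom.comp (LinearMap.prodMapAlgHom R p q)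

lemma endProdAlgHomOfIsCompl_apply_left (h : IsCompl p q) (g : Module.End R p × Module.End R q)
    (x : p) : endProdAlgHomOfIsCompl h g x = g.1 x := by
  simp [endProdAlgHomOfIsCompl, LinearEquiv.conjAlgEquiv_apply]

lemma endProdAlgHomOfIsCompl_apply_right (h : IsCompl p q)
    (g : Module.End R p × Module.End R q) (x : q) : endProdAlgHomOfIsCompl h g x = g.2 x := by
  simp [endProdAlgHomOfIsCompl, LinearEquiv.conjAlgEquiv_apply]

lemma endProdAlgHomOfIsCompl_injective (h : IsCompl p q) :
    Function.Injective (endProdAlgHomOfIsCompl h) := by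
  intro g g' hg
  ext x
  · rw [← endProdAlgHomOfIsCompl_apply_left h, hg, endProdAlgHomOfIsCompl_apply_left]
  · rw [← endProdAlgHomOfIsCompl_apply_right h, hg, endProdAlgHomOfIsCompl_apply_right]

lemma range_endProdAlgHomOfIsCompl (h : IsCompl p q) :
    (endProdAlgHomOfIsCompl h).range = p.stabilizerSubalgebra ⊓ q.stabilizerSubalgebra := by
  ext f
  rw [AlgHom.mem_range]
  constructor
  · rintro ⟨g, rfl⟩
    refine ⟨fun x hx => ?_, fun x hx => ?_⟩
    · simpa only [endProdAlgHomOfIsCompl_apply_left h g ⟨x, hx⟩] using (g.1 ⟨x, hx⟩).2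
    · simpa only [endProdAlgHomOfIsCompl_apply_right h g ⟨x, hx⟩] using (g.2 ⟨x, hx⟩).2
  · rintro ⟨hp, hq⟩
    refine ⟨(f.restrict hp, f.restrict hq), ?_⟩
    apply LinearMap.ext_on_codisjoint h.codisjoint <;> intro x hx
    · exact endProdAlgHomOfIsCompl_apply_left h _ ⟨x, hx⟩
    · exact endProdAlgHomOfIsCompl_apply_right h _ ⟨x, hx⟩

noncomputable def stabilizerSubalgebraInfEquivOfIsCompl (h : IsCompl p q) :
    ↥(p.stabilizerSubalgebra ⊓ q.stabilizerSubalgebra) ≃ₐ[R]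
      Module.End R p × Module.End R q :=
  ((AlgEquiv.ofInjective _ (endProdAlgHomOfIsCompl_injective h)).trans
    (Subalgebra.equivOfEq _ _ (range_endProdAlgHomOfIsCompl h))).symm

end IsCompl

end Submodule

namespace Matrix

lemma finrank_ker_traceLinearMap {n F : Type*} [Fintype n] [Nonempty n] [Field F] :
    finrank F (ker (traceLinearMap n F F)) = Fintype.card n ^ 2 - 1 := by
  have h := (traceLinearMap n F F).finrank_range_add_finrank_ker
  rw [range_eq_top_of_surjective _ trace_surjective, finrank_top, finrank_self,
    finrank_matrix, finrank_self, mul_one, ← sq] at h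
  omega

variable {n F : Type*} [Fintype n] [DecidableEq n] [Field F]

local notation:max "ad" a:max =>
  (LinearMap.mulLeft F a - LinearMap.mulRight F a : Module.End F (Matrix n n F))
local notation "𝒰" => Algebra.adjoin F (Set.range fun a : Matrix n n F => ad a)

theorem sum_single_mul_mul_single_eq_trace_smul_one (z : Matrix n n F) :
    ∑ a, ∑ b, single a b (1 : F) * z * single b a 1 = z.trace • 1 := by
  simp only [single_mul_mul_single, one_mul, mul_one]
  ext i j
  simp [sum_apply, single, trace, one_apply, ite_and]

theorem sum_ad_single_mul_ad_single_mul_apply (u z : Matrix n n F) :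
    ∑ a, ∑ b, ad (single a b (1 : F)) (ad (single b a 1 * u) z) =
      (Fintype.card n : F) • (u * z) - z.trace • u - (u * z).trace • 1 + u.trace • z := by
  have hterm : ∀ a b : n, ad (single a b (1 : F)) (ad (single b a 1 * u) z) =
      single a b 1 * single b a 1 * (u * z) - single a b 1 * z * single b a 1 * u
        - single b a 1 * (u * z) * single a b 1 + z * (single b a 1 * u * single a b 1) := by
    intro a b
    simp only [LinearMap.sub_apply, mulLeft_apply, mulRight_apply]
    noncomm_ring
  have hcard : ∑ a, ∑ b, single a b (1 : F) * single b a 1 =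
      (Fintype.card n : F) • (1 : Matrix n n F) := by
    simpa using sum_single_mul_mul_single_eq_trace_smul_one (1 : Matrix n n F)
  simp only [hterm, Finset.sum_add_distrib, Finset.sum_sub_distrib, ← Finset.sum_mul,
    ← Finset.mul_sum]
  rw [Finset.sum_comm (f := fun a b => single b a (1 : F) * (u * z) * single a b 1),
    Finset.sum_comm (f := fun a b => single b a (1 : F) * u * single a b 1)]
  simp only [hcard, sum_single_mul_mul_single_eq_trace_smul_one, smul_mul_assoc, one_mul,
    mul_smul_comm, mul_one]

lemma ad_mem_adjoin (a : Matrix n n F) : ad a ∈ 𝒰 := Algebra.subset_adjoin ⟨a, rfl⟩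

lemma sum_ad_single_mul_ad_single_mul_mem (u : Matrix n n F) :
    ∑ a, ∑ b, ad (single a b (1 : F)) * ad (single b a 1 * u) ∈ 𝒰 :=
  Subalgebra.sum_mem _ fun _ _ => Subalgebra.sum_mem _ fun _ _ =>
    mul_mem (ad_mem_adjoin _) (ad_mem_adjoin _)

noncomputable def tracelessProj : Module.End F (Matrix n n F) :=
  1 - (Fintype.card n : F)⁻¹ • (traceLinearMap n F F).smulRight 1

lemma tracelessProj_apply (z : Matrix n n F) :
    tracelessProj z = z - ((Fintype.card n : F)⁻¹ * z.trace) • (1 : Matrix n n F) := by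
  simp [tracelessProj, smul_smul]

lemma tracelessProj_of_trace_eq_zero {z : Matrix n n F} (hz : z.trace = 0) :
    tracelessProj z = z := by
  simp [tracelessProj_apply, hz]

lemma trace_tracelessProj (hn : (Fintype.card n : F) ≠ 0) (z : Matrix n n F) :
    (tracelessProj z).trace = 0 := by
  simp [tracelessProj_apply]
  field_simp
  ring

lemma tracelessProj_smul_one (hn : (Fintype.card n : F) ≠ 0) (c : F) :
    tracelessProj (c • (1 : Matrix n n F)) = 0 := by
  simp [tracelessProj_apply, hn]

lemma isCompl_span_one_ker_trace (hn : (Fintype.card n : F) ≠ 0) :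
    IsCompl (Submodule.span F {(1 : Matrix n n F)}) (ker (traceLinearMap n F F)) := by
  constructor
  · rw [Submodule.disjoint_def]
    rintro _ hx hx0
    obtain ⟨c, rfl⟩ := Submodule.mem_span_singleton.mp hx
    simp [hn] at hx0
    simp [hx0]
  · rw [Submodule.codisjoint_iff_exists_add_eq]
    intro z
    refine ⟨z - tracelessProj z, tracelessProj z, ?_, trace_tracelessProj hn z,
      sub_add_cancel _ _⟩
    rw [tracelessProj_apply, sub_sub_cancel]
    exact Submodule.smul_mem _ _ (Submodule.mem_span_singleton_self _)

lemma tracelessProj_mem_adjoin (h2n : (2 * Fintype.card n : F) ≠ 0) : tracelessProj ∈ 𝒰 := by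
  have hsum : ∑ a, ∑ b, ad (single a b (1 : F)) * ad (single b a 1 * (1 : Matrix n n F)) =
      (2 * Fintype.card n : F) • tracelessProj := by
    ext1 z
    simp only [LinearMap.sum_apply, Module.End.mul_apply, sum_ad_single_mul_ad_single_mul_apply,
      LinearMap.smul_apply, tracelessProj_apply, trace_one, one_mul]
    rw [smul_sub, smul_smul, mul_assoc, mul_inv_cancel_left₀ (right_ne_zero_of_mul h2n)]
    module
  have hmem := sum_ad_single_mul_ad_single_mul_mem (1 : Matrix n n F)
  rw [hsum] at hmem
  exact (Submodule.smul_mem_iff (Subalgebra.toSubmodule 𝒰) h2n).mp hmem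

lemma tracelessProj_mul_mulLeft_mul_tracelessProj_mem (h2n : (2 * Fintype.card n : F) ≠ 0)
    (u : Matrix n n F) : tracelessProj * mulLeft F u * tracelessProj ∈ 𝒰 := by
  have hn := right_ne_zero_of_mul h2n
  have hπ := tracelessProj_mem_adjoin h2n
  have key : tracelessProj * (∑ a, ∑ b, ad (single a b (1 : F)) * ad (single b a 1 * u)) *
      tracelessProj = (Fintype.card n : F) • (tracelessProj * mulLeft F u * tracelessProj) +
        u.trace • tracelessProj := by
    ext1 z
    have hz := tracelessProj_of_trace_eq_zero (trace_tracelessProj hn z)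
    simp only [Module.End.mul_apply, LinearMap.sum_apply, sum_ad_single_mul_ad_single_mul_apply,
      trace_tracelessProj hn, zero_smul, sub_zero, map_add, map_sub, map_smul,
      tracelessProj_smul_one hn, hz, LinearMap.add_apply, LinearMap.smul_apply, mulLeft_apply]
  have hmem := sub_mem (mul_mem (mul_mem hπ (sum_ad_single_mul_ad_single_mul_mem u)) hπ)
    (Subalgebra.smul_mem _ hπ u.trace)
  rw [key, add_sub_cancel_right] at hmem
  exact (Submodule.smul_mem_iff (Subalgebra.toSubmodule 𝒰) hn).mp hmem

lemma tracelessProj_mul_mul_tracelessProj_mem (h2n : (2 * Fintype.card n : F) ≠ 0)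
    (f : Module.End F (Matrix n n F)) : tracelessProj * f * tracelessProj ∈ 𝒰 := by
  have : Nonempty n := Fintype.card_pos_iff.mp <| Nat.pos_of_ne_zero fun h => by simp [h] at h2n
  obtain ⟨t, rfl⟩ := (IsAzumaya.matrix F n).bij.2 f
  induction t using TensorProduct.induction_on with
  | zero => simp
  | tmul x y =>
    have key : tracelessProj * AlgHom.mulLeftRight F (Matrix n n F) (x ⊗ₜ y) * tracelessProj =
        tracelessProj * mulLeft F (x * y.unop) * tracelessProj -
          tracelessProj * mulLeft F x * tracelessProj * ad y.unop * tracelessProj := by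
      ext1 z
      have hc : (y.unop * tracelessProj z - tracelessProj z * y.unop).trace = 0 := by
        rw [trace_sub, trace_mul_comm, sub_self]
      simp only [Module.End.mul_apply, LinearMap.sub_apply, AlgHom.mulLeftRight_apply,
        mulLeft_apply, mulRight_apply, tracelessProj_of_trace_eq_zero hc, ← map_sub]
      congr 1
      noncomm_ring
    rw [key]
    exact sub_mem (tracelessProj_mul_mulLeft_mul_tracelessProj_mem h2n _)
      (mul_mem (mul_mem (tracelessProj_mul_mulLeft_mul_tracelessProj_mem h2n _)
        (ad_mem_adjoin _)) (tracelessProj_mem_adjoin h2n))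
  | add s t hs ht =>
    rw [map_add, mul_add, add_mul]
    exact add_mem hs ht

lemma adjoin_range_ad_le :
    𝒰 ≤ (Submodule.span F {(1 : Matrix n n F)}).stabilizerSubalgebra ⊓
      (ker (traceLinearMap n F F)).stabilizerSubalgebra := by
  rw [Algebra.adjoin_le_iff]
  rintro _ ⟨a, rfl⟩
  refine ⟨fun x hx => ?_, fun x _ => ?_⟩
  · obtain ⟨c, rfl⟩ := Submodule.mem_span_singleton.mp hx
    simp
  · show (a * x - x * a).trace = 0
    rw [trace_sub, trace_mul_comm, sub_self]

lemma stabilizer_le_adjoin_range_ad (h2n : (2 * Fintype.card n : F) ≠ 0) :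
    (Submodule.span F {(1 : Matrix n n F)}).stabilizerSubalgebra ⊓
      (ker (traceLinearMap n F F)).stabilizerSubalgebra ≤ 𝒰 := by
  rintro f ⟨hf₁, hf₂⟩
  obtain ⟨c, hc⟩ :=
    Submodule.mem_span_singleton.mp (hf₁ 1 (Submodule.mem_span_singleton_self 1))
  have key : f = algebraMap F _ c - c • tracelessProj + tracelessProj * f * tracelessProj := by
    ext1 z
    have hfz : tracelessProj (f (tracelessProj z)) = f (tracelessProj z) :=
      tracelessProj_of_trace_eq_zero (hf₂ _ (trace_tracelessProj (right_ne_zero_of_mul h2n) z))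
    simp only [LinearMap.add_apply, LinearMap.sub_apply, LinearMap.smul_apply,
      Module.End.mul_apply, Module.algebraMap_end_apply, hfz]
    rw [tracelessProj_apply, map_sub, map_smul, ← hc]
    module
  rw [key]
  exact add_mem (sub_mem (Subalgebra.algebraMap_mem _ c)
    (Subalgebra.smul_mem _ (tracelessProj_mem_adjoin h2n) c))
    (tracelessProj_mul_mul_tracelessProj_mem h2n f)

lemma adjoin_range_ad_eq (h2n : (2 * Fintype.card n : F) ≠ 0) :
    𝒰 = (Submodule.span F {(1 : Matrix n n F)}).stabilizerSubalgebra ⊓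
      (ker (traceLinearMap n F F)).stabilizerSubalgebra :=
  le_antisymm adjoin_range_ad_le (stabilizer_le_adjoin_range_ad h2n)

end Matrix

/-- Let `F` be a field of characteristic zero and `k ≥ 2`.  The unital
`F`-subalgebra `U` of `End_F(M_k(F))` generated by the inner derivations `ad_a`, `a ∈ M_k(F)`,
equals the set of all `f ∈ End_F(M_k(F))` with `f(F·I_k) ⊆ F·I_k` and `f(sl_k(F)) ⊆ sl_k(F)`;
equivalently, `U ≅ End_F(F·I_k) ⊕ End_F(sl_k(F))` as `F`-algebras.  In particular
`dim_F U = (k² − 1)² + 1`. -/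
theorem enveloping_algebra_of_inner_derivations_of_matrix_algebra
    (F : Type*) [Field F] [CharZero F] (k : ℕ) (hk : 2 ≤ k) :
    (∀ f : Module.End F (Matrix (Fin k) (Fin k) F),
      f ∈ Algebra.adjoin F (Set.range fun a : Matrix (Fin k) (Fin k) F =>
            LinearMap.mulLeft F a - LinearMap.mulRight F a) ↔
        ((∀ x : Matrix (Fin k) (Fin k) F, (∃ c : F, x = c • (1 : Matrix (Fin k) (Fin k) F)) →
            ∃ c : F, f x = c • (1 : Matrix (Fin k) (Fin k) F)) ∧
          (∀ x : Matrix (Fin k) (Fin k) F, x.trace = 0 → (f x).trace = 0))) ∧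
    Nonempty ((Algebra.adjoin F (Set.range fun a : Matrix (Fin k) (Fin k) F =>
            LinearMap.mulLeft F a - LinearMap.mulRight F a)) ≃ₐ[F]
        (Module.End F (Submodule.span F {(1 : Matrix (Fin k) (Fin k) F)}) ×
          Module.End F (LinearMap.ker (Matrix.traceLinearMap (Fin k) F F)))) ∧
    Module.finrank F (Algebra.adjoin F (Set.range fun a : Matrix (Fin k) (Fin k) F =>
          LinearMap.mulLeft F a - LinearMap.mulRight F a)) = (k ^ 2 - 1) ^ 2 + 1 := by
  have h2n : (2 * Fintype.card (Fin k) : F) ≠ 0 := by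
    simp only [Fintype.card_fin]
    exact_mod_cast (by omega : 2 * k ≠ 0)
  have : NeZero k := ⟨by omega⟩
  have hU := Matrix.adjoin_range_ad_eq h2n
  have e := (Subalgebra.equivOfEq _ _ hU).trans (Submodule.stabilizerSubalgebraInfEquivOfIsCompl
    (Matrix.isCompl_span_one_ker_trace (right_ne_zero_of_mul h2n)))
  refine ⟨fun f => ?_, ⟨e⟩, ?_⟩
  · rw [hU]
    simp only [Algebra.mem_inf, Submodule.mem_stabilizerSubalgebra, Submodule.mem_span_singleton,
      eq_comm, LinearMap.mem_ker, Matrix.traceLinearMap_apply]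
  · rw [e.toLinearEquiv.finrank_eq, finrank_prod, finrank_linearMap, finrank_linearMap,
      finrank_span_singleton one_ne_zero, Matrix.finrank_ker_traceLinearMap, Fintype.card_fin]
    ring
end
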